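/- Takayama's statistic T_n = 1 + 1/n − (2/(μ_n n²)) Σ_{j=1}^{Q_n} (n−j+1) X_{j,n} converges in probability, as n → ∞, to the Takayama parameter T = 1 − (2/μ) ∫ x(1−F(x)) 1_{(x ≤ Z)} dF(x). -/

import Mathlib

/-!
For a sample without ties, the weight `n - j + 1` of the `j`-th order statistic counts the
observations that are at least as large, so
`Σ_{j ≤ Q_n} (n - j + 1) X_{j,n} = Σ_{i,k ≤ n} ℓ(X_i) 1{X_i ≤ X_k}` and
`T_n = 1 + 1/n - (2/μ_n) V_n` with the V-statistic `V_n = n⁻² Σ_{i,k} ℓ(X_i) 1{X_i ≤ X_k}`.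
Its kernel is bounded by `|Z|` on nonnegative data, and two centred kernel terms are
uncorrelated unless two of their four indices coincide, which happens for `O(n³)` of the `n⁴`
index quadruples; hence `E (V_n - θ)² = O(1/n)`, where by Fubini
`θ = E[ℓ(X₁) 1{X₁ ≤ X₂}] = ∫ ℓ (1 - F) dF` because `P(X₂ ≥ a) = 1 - F(a)` for continuous `F`.
The strong law gives `μ_n → μ`, and ties have probability zero because `F` is continuous.
-/

open MeasureTheory ProbabilityTheory Filter Set

/-- The sorted list of the sample `X 0, ..., X (n-1)` (order statistics). -/
noncomputable def sortedSample {Ω : Type*} (X : ℕ → Ω → ℝ) (n : ℕ) (ω : Ω) : List ℝ :=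
  Multiset.sort ((Finset.range n).val.map (fun i => X i ω)) (· ≤ ·)

/-- Number of poor individuals: `Q_n = #{i ≤ n : X_i ≤ Z}`. -/
noncomputable def povertyCount {Ω : Type*} (X : ℕ → Ω → ℝ) (Z : ℝ) (n : ℕ) (ω : Ω) : ℕ :=
  ((Finset.range n).filter (fun i => X i ω ≤ Z)).card

/-- Takayama's statistic
`T_n = 1 + 1/n − (2/(μ_n n²)) Σ_{j=1}^{Q_n} (n−j+1) X_{j,n}`. -/
noncomputable def takayamaStat {Ω : Type*} (X : ℕ → Ω → ℝ) (Z : ℝ) (n : ℕ) (ω : Ω) : ℝ :=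
  1 + 1 / (n : ℝ) -
    (2 / (((∑ i ∈ Finset.range n, X i ω) / n) * (n : ℝ) ^ 2)) *
      ∑ j ∈ Finset.range (povertyCount X Z n ω),
        ((n : ℝ) - j) * (sortedSample X n ω).getD j 0

/-- Empirical distribution function `F_n(x) = n⁻¹ #{i ≤ n : X_i ≤ x}`. -/
noncomputable def empCdf {Ω : Type*} (X : ℕ → Ω → ℝ) (n : ℕ) (ω : Ω) (x : ℝ) : ℝ :=
  ((Finset.range n).filter (fun i => X i ω ≤ x)).card / n

/-- Functional empirical process `𝔾_n(f) = n^{−1/2} Σ_{i=1}^n (f(X_i) − E f(X₁))`. -/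
noncomputable def fep {Ω : Type*} [MeasureSpace Ω] (X : ℕ → Ω → ℝ) (n : ℕ) (f : ℝ → ℝ)
    (ω : Ω) : ℝ :=
  (∑ i ∈ Finset.range n, (f (X i ω) - ∫ ω', f (X 0 ω'))) / Real.sqrt n

/-- Generalized inverse (quantile function) `F⁻¹(s) = inf {x : F(x) ≥ s}`. -/
noncomputable def Finv (F : ℝ → ℝ) (s : ℝ) : ℝ := sInf {x | s ≤ F x}

/-- `h(x) = x (1 − F(x)) 1_{(x ≤ Z)}`. -/
noncomputable def hFun (F : ℝ → ℝ) (Z x : ℝ) : ℝ := if x ≤ Z then x * (1 - F x) else 0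

/-- `ℓ(x) = x 1_{(x ≤ Z)}`. -/
noncomputable def ellFun (Z x : ℝ) : ℝ := if x ≤ Z then x else 0

/-- `g(x) = 2 (μ⁻² (∫ h dF) x − μ⁻¹ h(x))`. -/
noncomputable def gFun (F : ℝ → ℝ) (Z μ EH x : ℝ) : ℝ :=
  2 * (EH / μ ^ 2 * x - hFun F Z x / μ)

/-- `q(x) = −(2/μ) ℓ(x)`. -/
noncomputable def qFun (Z μ x : ℝ) : ℝ := -(2 / μ) * ellFun Z x

open Topology

namespace MeasureTheory

variable {α ι : Type*} {m : MeasurableSpace α} {μ : Measure α} {l : Filter ι}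

theorem tendstoInMeasure_of_integral_sq_sub_le [IsFiniteMeasure μ] {f : ι → α → ℝ} {a : ℝ}
    {b : ι → ℝ} (hint : ∀ᶠ i in l, Integrable (fun x => (f i x - a) ^ 2) μ)
    (hbound : ∀ᶠ i in l, ∫ x, (f i x - a) ^ 2 ∂μ ≤ b i) (hb : Tendsto b l (𝓝 0)) :
    TendstoInMeasure μ f l (fun _ => a) := by
  rw [tendstoInMeasure_iff_measureReal_dist]
  intro ε hε
  refine tendsto_of_tendsto_of_tendsto_of_le_of_le' tendsto_const_nhds
    (by simpa using hb.div_const (ε ^ 2)) (Eventually.of_forall fun _ => measureReal_nonneg) ?_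
  filter_upwards [hint, hbound] with i hi hbi
  rw [le_div_iff₀ (by positivity), mul_comm]
  calc ε ^ 2 * μ.real {x | ε ≤ dist (f i x) a}
      ≤ ε ^ 2 * μ.real {x | ε ^ 2 ≤ (f i x - a) ^ 2} := by
        refine mul_le_mul_of_nonneg_left (measureReal_mono fun x hx => ?_) (by positivity)
        simpa [Real.dist_eq, sq_abs] using pow_le_pow_left₀ hε.le hx 2
    _ ≤ ∫ x, (f i x - a) ^ 2 ∂μ :=
        mul_meas_ge_le_integral_of_nonneg (ae_of_all _ fun x => sq_nonneg _) hi _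
    _ ≤ b i := hbi

theorem TendstoInMeasure.comp₂_of_continuousAt {E₁ E₂ G : Type*} [PseudoMetricSpace E₁]
    [PseudoMetricSpace E₂] [PseudoMetricSpace G] {f : ι → α → E₁} {g : ι → α → E₂} {a : E₁}
    {b : E₂} {φ : E₁ → E₂ → G} (hφ : ContinuousAt (Function.uncurry φ) (a, b))
    (hf : TendstoInMeasure μ f l (fun _ => a)) (hg : TendstoInMeasure μ g l (fun _ => b)) :
    TendstoInMeasure μ (fun i x => φ (f i x) (g i x)) l (fun _ => φ a b) := by
  rw [tendstoInMeasure_iff_dist] at hf hg ⊢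
  intro ε hε
  obtain ⟨δ, hδ, hφδ⟩ := Metric.continuousAt_iff.mp hφ ε hε
  have hsub : ∀ i, {x | ε ≤ dist (φ (f i x) (g i x)) (φ a b)} ⊆
      {x | δ / 2 ≤ dist (f i x) a} ∪ {x | δ / 2 ≤ dist (g i x) b} := by
    intro i x hx
    by_contra hcon
    simp only [mem_union, mem_ofPred_eq, not_or, not_le] at hcon
    have : dist (f i x, g i x) (a, b) < δ := by
      rw [Prod.dist_eq]; exact max_lt (by linarith) (by linarith)
    exact (hφδ this).not_ge hx
  have hsum := (hf (δ / 2) (by positivity)).add (hg (δ / 2) (by positivity))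
  rw [add_zero] at hsum
  exact tendsto_of_tendsto_of_tendsto_of_le_of_le tendsto_const_nhds hsum (fun _ => zero_le)
    fun i => (measure_mono (hsub i)).trans (measure_union_le _ _)

end MeasureTheory

theorem cdf_map_eq {Ω : Type*} {mΩ : MeasurableSpace Ω} {μ : Measure Ω} [IsProbabilityMeasure μ]
    {Y : Ω → ℝ} (hY : Measurable Y) {F : ℝ → ℝ} (hF : ∀ x, F x = (μ {ω | Y ω ≤ x}).toReal) :
    cdf (μ.map Y) = F := by
  have := Measure.isProbabilityMeasure_map (μ := μ) hY.aemeasurable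
  ext x
  rw [cdf_eq_real, measureReal_def, Measure.map_apply hY measurableSet_Iic, hF]
  rfl

theorem nullSingletonClass_of_continuous_cdf (ν : Measure ℝ) [IsProbabilityMeasure ν]
    (hcont : Continuous (cdf ν)) : NullSingletonClass ν where
  measure_singleton x := by
    have hleft : Function.leftLim (cdf ν) x = cdf ν x :=
      leftLim_eq_of_tendsto (hcont.continuousAt.tendsto.mono_left nhdsWithin_le_nhds)
    rw [← measure_cdf ν, StieltjesFunction.measure_singleton, hleft, sub_self,
      ENNReal.ofReal_zero]

theorem measure_diagonal_prod_eq_zero (μ ν : Measure ℝ) [SFinite ν] [NullSingletonClass ν] :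
    (μ.prod ν) {p | p.1 = p.2} = 0 := by
  rw [Measure.prod_apply (measurableSet_eq_fun measurable_fst measurable_snd)]
  simp [Set.preimage, measure_singleton]

section IIDSequence

variable {Ω E : Type*} {mΩ : MeasurableSpace Ω} {mE : MeasurableSpace E} {μ : Measure Ω}
  [IsProbabilityMeasure μ] {X : ℕ → Ω → E}

theorem map_prodMk_eq_prod_of_iid (hX : ∀ i, Measurable (X i)) (hindep : iIndepFun X μ)
    (hident : ∀ i, IdentDistrib (X i) (X 0) μ μ) {i k : ℕ} (hik : i ≠ k) :
    μ.map (fun ω => (X i ω, X k ω)) = (μ.map (X 0)).prod (μ.map (X 0)) := by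
  rw [(indepFun_iff_map_prod_eq_prod_map_map (hX i).aemeasurable (hX k).aemeasurable).mp
    (hindep.indepFun hik), (hident i).map_eq, (hident k).map_eq]

theorem identDistrib_prodMk_of_iid (hX : ∀ i, Measurable (X i)) (hindep : iIndepFun X μ)
    (hident : ∀ i, IdentDistrib (X i) (X 0) μ μ) {i k j l : ℕ} (hik : i ≠ k) (hjl : j ≠ l) :
    IdentDistrib (fun ω => (X i ω, X k ω)) (fun ω => (X j ω, X l ω)) μ μ where
  aemeasurable_fst := ((hX i).prodMk (hX k)).aemeasurable
  aemeasurable_snd := ((hX j).prodMk (hX l)).aemeasurable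
  map_eq := by
    rw [map_prodMk_eq_prod_of_iid hX hindep hident hik,
      map_prodMk_eq_prod_of_iid hX hindep hident hjl]

end IIDSequence

theorem ae_injective_of_iid {Ω : Type*} {mΩ : MeasurableSpace Ω} {μ : Measure Ω}
    [IsProbabilityMeasure μ] {X : ℕ → Ω → ℝ} (hX : ∀ i, Measurable (X i))
    (hindep : iIndepFun X μ) (hident : ∀ i, IdentDistrib (X i) (X 0) μ μ)
    [NullSingletonClass (μ.map (X 0))] :
    ∀ᵐ ω ∂μ, Function.Injective fun i => X i ω := by
  suffices ∀ i k, i ≠ k → ∀ᵐ ω ∂μ, X i ω ≠ X k ω by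
    simp only [← ae_all_iff] at this
    filter_upwards [this] with ω hω i k hik
    by_contra hne
    exact hω i k hne hik
  intro i k hik
  have hdiag := measure_diagonal_prod_eq_zero (μ.map (X 0)) (μ.map (X 0))
  rw [← map_prodMk_eq_prod_of_iid hX hindep hident hik,
    Measure.map_apply ((hX i).prodMk (hX k)) (measurableSet_eq_fun measurable_fst measurable_snd)]
    at hdiag
  exact measure_mono_null (fun ω hω => by simpa using hω) hdiag

section VStatistic

variable {Ω E : Type*} {mΩ : MeasurableSpace Ω} {mE : MeasurableSpace E} {μ : Measure Ω}
  [IsProbabilityMeasure μ] {X : ℕ → Ω → E} {κ : E → E → ℝ} {C : ℝ}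

noncomputable def vStat (κ : E → E → ℝ) (X : ℕ → Ω → E) (n : ℕ) (ω : Ω) : ℝ :=
  (∑ i ∈ Finset.range n, ∑ k ∈ Finset.range n, κ (X i ω) (X k ω)) / n ^ 2

def coincidences (i k i' k' : ℕ) : ℝ :=
  (if i = k then 1 else 0) + (if i' = k' then 1 else 0) + (if i = i' then 1 else 0) +
    (if i = k' then 1 else 0) + (if k = i' then 1 else 0) + (if k = k' then 1 else 0)

theorem one_le_coincidences {i k i' k' : ℕ}
    (h : i = k ∨ i' = k' ∨ i = i' ∨ i = k' ∨ k = i' ∨ k = k') : 1 ≤ coincidences i k i' k' := by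
  unfold coincidences
  split_ifs <;> norm_num
  simp_all

theorem sum_range_coincidences (n : ℕ) :
    ∑ i ∈ Finset.range n, ∑ k ∈ Finset.range n, ∑ i' ∈ Finset.range n, ∑ k' ∈ Finset.range n,
      coincidences i k i' k' = 6 * n ^ 3 := by
  unfold coincidences
  simp +contextual [Finset.sum_add_distrib, Finset.sum_ite_eq]
  ring

theorem abs_integral_le_of_forall_abs_le {f : Ω → ℝ} (h : ∀ ω, |f ω| ≤ C) :
    |∫ ω, f ω ∂μ| ≤ C := by
  simpa using norm_integral_le_of_norm_le_const (μ := μ) (f := f) (ae_of_all _ h)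

theorem abs_centered_kernel_mul_le (hC : ∀ i k ω, |κ (X i ω) (X k ω)| ≤ C) (i k i' k' : ℕ)
    (ω : Ω) :
    |(κ (X i ω) (X k ω) - ∫ ω', κ (X 0 ω') (X 1 ω') ∂μ) *
        (κ (X i' ω) (X k' ω) - ∫ ω', κ (X 0 ω') (X 1 ω') ∂μ)| ≤ 4 * C ^ 2 := by
  have hθ := abs_integral_le_of_forall_abs_le (μ := μ) (hC 0 1)
  have hcentered : ∀ i k, |κ (X i ω) (X k ω) - ∫ ω', κ (X 0 ω') (X 1 ω') ∂μ| ≤ 2 * C :=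
    fun i k => (abs_sub _ _).trans (by linarith [hC i k ω])
  rw [abs_mul, show 4 * C ^ 2 = (2 * C) * (2 * C) by ring]
  exact mul_le_mul (hcentered i k) (hcentered i' k') (abs_nonneg _)
    ((abs_nonneg _).trans (hcentered i k))

theorem integral_kernel_of_ne (hX : ∀ i, Measurable (X i)) (hindep : iIndepFun X μ)
    (hident : ∀ i, IdentDistrib (X i) (X 0) μ μ) (hκ : Measurable (Function.uncurry κ))
    {i k : ℕ} (hik : i ≠ k) :
    ∫ ω, κ (X i ω) (X k ω) ∂μ = ∫ ω, κ (X 0 ω) (X 1 ω) ∂μ :=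
  ((identDistrib_prodMk_of_iid hX hindep hident hik zero_ne_one).comp hκ).integral_eq

theorem integral_centered_kernel_mul_le (hX : ∀ i, Measurable (X i)) (hindep : iIndepFun X μ)
    (hident : ∀ i, IdentDistrib (X i) (X 0) μ μ) (hκ : Measurable (Function.uncurry κ))
    (hC : ∀ i k ω, |κ (X i ω) (X k ω)| ≤ C) (i k i' k' : ℕ) :
    ∫ ω, (κ (X i ω) (X k ω) - ∫ ω', κ (X 0 ω') (X 1 ω') ∂μ) *
        (κ (X i' ω) (X k' ω) - ∫ ω', κ (X 0 ω') (X 1 ω') ∂μ) ∂μ ≤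
      4 * C ^ 2 * coincidences i k i' k' := by
  set θ := ∫ ω', κ (X 0 ω') (X 1 ω') ∂μ
  by_cases hcoinc : i = k ∨ i' = k' ∨ i = i' ∨ i = k' ∨ k = i' ∨ k = k'
  · exact (le_abs_self _).trans ((abs_integral_le_of_forall_abs_le
      (abs_centered_kernel_mul_le hC i k i' k')).trans
      (le_mul_of_one_le_right (by positivity) (one_le_coincidences hcoinc)))
  · push Not at hcoinc
    obtain ⟨h1, h2, h3, h4, h5, h6⟩ := hcoinc
    have hind := (hindep.indepFun_prodMk_prodMk hX i k i' k' h3 h4 h5 h6).comp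
      (hκ.sub_const θ) (hκ.sub_const θ)
    have hint : Integrable (fun ω => κ (X i ω) (X k ω)) μ :=
      .of_bound (hκ.comp ((hX i).prodMk (hX k))).aestronglyMeasurable C (ae_of_all _ (hC i k))
    calc _ = (∫ ω, κ (X i ω) (X k ω) - θ ∂μ) * ∫ ω, κ (X i' ω) (X k' ω) - θ ∂μ :=
          hind.integral_fun_mul_eq_mul_integral
            ((hκ.sub_const θ).comp ((hX i).prodMk (hX k))).aestronglyMeasurable
            ((hκ.sub_const θ).comp ((hX i').prodMk (hX k'))).aestronglyMeasurable
      _ = 0 := by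
          rw [integral_sub hint (integrable_const θ), integral_const, probReal_univ, one_smul,
            integral_kernel_of_ne hX hindep hident hκ h1, sub_self, zero_mul]
      _ ≤ _ := by simp [coincidences, h1, h2, h3, h4, h5, h6]

theorem integral_sq_sum_sum_sub_le (hX : ∀ i, Measurable (X i)) (hindep : iIndepFun X μ)
    (hident : ∀ i, IdentDistrib (X i) (X 0) μ μ) (hκ : Measurable (Function.uncurry κ))
    (hC : ∀ i k ω, |κ (X i ω) (X k ω)| ≤ C) (n : ℕ) :
    ∫ ω, (∑ i ∈ Finset.range n, ∑ k ∈ Finset.range n,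
        (κ (X i ω) (X k ω) - ∫ ω', κ (X 0 ω') (X 1 ω') ∂μ)) ^ 2 ∂μ ≤ 24 * C ^ 2 * n ^ 3 := by
  set θ := ∫ ω', κ (X 0 ω') (X 1 ω') ∂μ
  set Y : ℕ × ℕ → Ω → ℝ := fun p ω => κ (X p.1 ω) (X p.2 ω) - θ
  set s := Finset.range n ×ˢ Finset.range n
  have hYY : ∀ p q, Integrable (fun ω => Y p ω * Y q ω) μ := fun p q =>
    .of_bound (((hκ.comp ((hX p.1).prodMk (hX p.2))).sub_const θ).mul
      ((hκ.comp ((hX q.1).prodMk (hX q.2))).sub_const θ)).aestronglyMeasurable (4 * C ^ 2)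
      (ae_of_all _ (abs_centered_kernel_mul_le hC p.1 p.2 q.1 q.2))
  have hflat : ∀ ω, ∑ i ∈ Finset.range n, ∑ k ∈ Finset.range n, (κ (X i ω) (X k ω) - θ) =
      ∑ p ∈ s, Y p ω := fun ω => (Finset.sum_product (f := fun p => Y p ω) _ _).symm
  simp_rw [hflat]
  calc ∫ ω, (∑ p ∈ s, Y p ω) ^ 2 ∂μ
      = ∑ p ∈ s, ∑ q ∈ s, ∫ ω, Y p ω * Y q ω ∂μ := by
        simp_rw [sq, Finset.sum_mul_sum]
        rw [integral_finsetSum _ fun p _ => integrable_finsetSum _ fun q _ => hYY p q]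
        exact Finset.sum_congr rfl fun p _ => integral_finsetSum _ fun q _ => hYY p q
    _ ≤ ∑ p ∈ s, ∑ q ∈ s, 4 * C ^ 2 * coincidences p.1 p.2 q.1 q.2 := by
        gcongr with p _ q _
        exact integral_centered_kernel_mul_le hX hindep hident hκ hC _ _ _ _
    _ = 24 * C ^ 2 * n ^ 3 := by
        simp only [← Finset.mul_sum, s, Finset.sum_product, sum_range_coincidences]
        ring

theorem vStat_sub_eq {n : ℕ} (hn : n ≠ 0) (θ : ℝ) (ω : Ω) :
    vStat κ X n ω - θ =
      (∑ i ∈ Finset.range n, ∑ k ∈ Finset.range n, (κ (X i ω) (X k ω) - θ)) / n ^ 2 := by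
  simp only [vStat, Finset.sum_sub_distrib, Finset.sum_const, Finset.card_range, nsmul_eq_mul]
  field_simp

theorem abs_vStat_le (hC : ∀ i k ω, |κ (X i ω) (X k ω)| ≤ C) {n : ℕ} (hn : n ≠ 0) (ω : Ω) :
    |vStat κ X n ω| ≤ C := by
  rw [vStat, abs_div, abs_of_nonneg (by positivity : (0 : ℝ) ≤ n ^ 2), div_le_iff₀ (by positivity)]
  calc |∑ i ∈ Finset.range n, ∑ k ∈ Finset.range n, κ (X i ω) (X k ω)|
      ≤ ∑ i ∈ Finset.range n, ∑ k ∈ Finset.range n, |κ (X i ω) (X k ω)| :=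
        (Finset.abs_sum_le_sum_abs _ _).trans
          (Finset.sum_le_sum fun i _ => Finset.abs_sum_le_sum_abs _ _)
    _ ≤ ∑ i ∈ Finset.range n, ∑ k ∈ Finset.range n, C := by gcongr with i _ k _; exact hC i k ω
    _ = C * n ^ 2 := by simp; ring

theorem tendstoInMeasure_vStat (hX : ∀ i, Measurable (X i)) (hindep : iIndepFun X μ)
    (hident : ∀ i, IdentDistrib (X i) (X 0) μ μ) (hκ : Measurable (Function.uncurry κ))
    (hC : ∀ i k ω, |κ (X i ω) (X k ω)| ≤ C) :
    TendstoInMeasure μ (vStat κ X) atTop (fun _ => ∫ ω, κ (X 0 ω) (X 1 ω) ∂μ) := by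
  set θ := ∫ ω, κ (X 0 ω) (X 1 ω) ∂μ
  have hθ : |θ| ≤ C := abs_integral_le_of_forall_abs_le (hC 0 1)
  refine tendstoInMeasure_of_integral_sq_sub_le (b := fun n : ℕ => 24 * C ^ 2 / n) ?_ ?_
    (tendsto_const_div_atTop_nhds_zero_nat _)
  · filter_upwards [eventually_ne_atTop 0] with n hn
    refine .of_bound (((Finset.measurable_sum _ fun i _ => Finset.measurable_sum _ fun k _ =>
      hκ.comp ((hX i).prodMk (hX k))).div_const _).sub_const θ |>.pow_const 2).aestronglyMeasurable
      ((2 * C) ^ 2) (ae_of_all _ fun ω => ?_)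
    rw [Real.norm_eq_abs, abs_pow]
    gcongr
    exact (abs_sub _ _).trans (by linarith [abs_vStat_le hC hn ω])
  · filter_upwards [eventually_ne_atTop 0] with n hn
    simp_rw [vStat_sub_eq hn θ, div_pow, integral_div]
    rw [div_le_div_iff₀ (by positivity) (by positivity)]
    calc _ ≤ 24 * C ^ 2 * n ^ 3 * n := by
          gcongr
          exact integral_sq_sum_sum_sub_le hX hindep hident hκ hC n
      _ = 24 * C ^ 2 * ((n : ℝ) ^ 2) ^ 2 := by ring

end VStatistic

theorem List.sum_range_length_getD {α M : Type*} [AddCommMonoid M] (L : List α) (f : α → M)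
    (d : α) :
    ∑ j ∈ Finset.range L.length, f (L.getD j d) = (L.map f).sum := by
  induction L with
  | nil => simp
  | cons x L ih =>
    simp only [List.length_cons, Finset.sum_range_succ', List.getD_cons_succ, List.getD_cons_zero,
      ih, List.map_cons, List.sum_cons, add_comm]

theorem Finset.filter_range_le_eq_range_card {α : Type*} [LinearOrder α] {a : ℕ → α} {n : ℕ}
    (ha : MonotoneOn a (Set.Iio n)) (Z : α) :
    (range n).filter (a · ≤ Z) = range ((range n).filter (a · ≤ Z)).card := by
  induction n with
  | zero => simp
  | succ n ih =>
    rw [range_add_one, filter_insert]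
    split_ifs with h
    · have hall : (range n).filter (a · ≤ Z) = range n := filter_true_of_mem fun j hj =>
        (ha (by simpa using (mem_range.mp hj).trans n.lt_succ_self) (by simp)
          (mem_range.mp hj).le).trans h
      rw [hall, card_insert_of_notMem (by simp), card_range, range_add_one]
    · exact ih (ha.mono fun j (hj : j < n) => (hj.trans n.lt_succ_self : j < n + 1))

theorem Finset.card_filter_range_apply_le_eq_sub {α : Type*} [LinearOrder α] {a : ℕ → α}
    {n j : ℕ} (ha : StrictMonoOn a (Set.Iio n)) (hj : j < n) :
    ((range n).filter (a j ≤ a ·)).card = n - j := by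
  rw [← Nat.card_Ico j n]
  congr 1
  ext j'
  simp only [mem_filter, mem_range, mem_Ico]
  exact ⟨fun ⟨hj', hle⟩ => ⟨(ha.le_iff_le hj hj').mp hle, hj'⟩,
    fun ⟨hle, hj'⟩ => ⟨hj', (ha.le_iff_le hj hj').mpr hle⟩⟩

noncomputable def takayamaKernel (Z a b : ℝ) : ℝ := if a ≤ b then ellFun Z a else 0

theorem measurable_ellFun (Z : ℝ) : Measurable (ellFun Z) :=
  Measurable.ite measurableSet_Iic measurable_id measurable_const

theorem measurable_takayamaKernel (Z : ℝ) : Measurable (Function.uncurry (takayamaKernel Z)) :=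
  Measurable.ite (measurableSet_le measurable_fst measurable_snd)
    ((measurable_ellFun Z).comp measurable_fst) measurable_const

theorem abs_takayamaKernel_le {a : ℝ} (ha : 0 ≤ a) (Z b : ℝ) : |takayamaKernel Z a b| ≤ |Z| := by
  unfold takayamaKernel ellFun
  split_ifs with h₁ h₂
  · exact abs_le_abs_of_nonneg ha h₂
  all_goals simp

theorem hFun_eq_ellFun_mul (F : ℝ → ℝ) (Z x : ℝ) : hFun F Z x = ellFun Z x * (1 - F x) := by
  unfold hFun ellFun
  split_ifs <;> simp

theorem integral_takayamaKernel_right (ν : Measure ℝ) [IsProbabilityMeasure ν]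
    [NullSingletonClass ν] (Z a : ℝ) :
    ∫ b, takayamaKernel Z a b ∂ν = ellFun Z a * (1 - cdf ν a) := by
  have hind : (fun b => takayamaKernel Z a b) = (Ici a).indicator fun _ => ellFun Z a := by
    ext b
    simp [takayamaKernel, indicator]
  rw [hind, integral_indicator_const _ measurableSet_Ici, smul_eq_mul,
    measureReal_congr Ioi_ae_eq_Ici.symm, ← compl_Iic, probReal_compl_eq_one_sub measurableSet_Iic,
    cdf_eq_real, mul_comm]

theorem integral_takayamaKernel_of_iid {Ω : Type*} {mΩ : MeasurableSpace Ω} {μ : Measure Ω}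
    [IsProbabilityMeasure μ] {X : ℕ → Ω → ℝ} (hX : ∀ i, Measurable (X i))
    (hindep : iIndepFun X μ) (hident : ∀ i, IdentDistrib (X i) (X 0) μ μ)
    (hnonneg : ∀ ω, 0 ≤ X 0 ω) [NullSingletonClass (μ.map (X 0))] (Z : ℝ) :
    ∫ ω, takayamaKernel Z (X 0 ω) (X 1 ω) ∂μ =
      ∫ ω, ellFun Z (X 0 ω) * (1 - cdf (μ.map (X 0)) (X 0 ω)) ∂μ := by
  set ν := μ.map (X 0)
  have : IsProbabilityMeasure ν := Measure.isProbabilityMeasure_map (hX 0).aemeasurable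
  have hpair := map_prodMk_eq_prod_of_iid hX hindep hident zero_ne_one
  have hκ := measurable_takayamaKernel Z
  have hint : Integrable (Function.uncurry (takayamaKernel Z)) (ν.prod ν) := by
    rw [← hpair, integrable_map_measure hκ.aestronglyMeasurable ((hX 0).prodMk (hX 1)).aemeasurable]
    exact .of_bound (hκ.comp ((hX 0).prodMk (hX 1))).aestronglyMeasurable |Z|
      (ae_of_all _ fun ω => abs_takayamaKernel_le (hnonneg ω) Z _)
  calc ∫ ω, takayamaKernel Z (X 0 ω) (X 1 ω) ∂μ
      = ∫ p, Function.uncurry (takayamaKernel Z) p ∂(ν.prod ν) := by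
        rw [← hpair, integral_map ((hX 0).prodMk (hX 1)).aemeasurable hκ.aestronglyMeasurable]
        rfl
    _ = ∫ a, ∫ b, takayamaKernel Z a b ∂ν ∂ν := integral_prod _ hint
    _ = ∫ a, ellFun Z a * (1 - cdf ν a) ∂ν := by simp_rw [integral_takayamaKernel_right]
    _ = ∫ ω, ellFun Z (X 0 ω) * (1 - cdf ν (X 0 ω)) ∂μ :=
        integral_map (hX 0).aemeasurable ((measurable_ellFun Z).mul
          (measurable_const.sub (cdf ν).mono.measurable)).aestronglyMeasurable

theorem sum_range_sub_mul_eq_sum_sum_takayamaKernel {a : ℕ → ℝ} {n : ℕ}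
    (ha : StrictMonoOn a (Set.Iio n)) (Z : ℝ) :
    ∑ j ∈ Finset.range ((Finset.range n).filter (a · ≤ Z)).card, ((n : ℝ) - j) * a j =
      ∑ j ∈ Finset.range n, ∑ j' ∈ Finset.range n, takayamaKernel Z (a j) (a j') := by
  rw [← Finset.filter_range_le_eq_range_card ha.monotoneOn, Finset.sum_filter]
  refine Finset.sum_congr rfl fun j hj => ?_
  have hj' := Finset.mem_range.mp hj
  have hrank :
      ∑ j' ∈ Finset.range n, takayamaKernel Z (a j) (a j') = (n - j) * ellFun Z (a j) := by
    simp only [takayamaKernel, Finset.sum_ite, Finset.sum_const_zero, add_zero, Finset.sum_const,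
      Finset.card_filter_range_apply_le_eq_sub ha hj', nsmul_eq_mul, Nat.cast_sub hj'.le]
  rw [hrank, ellFun]
  split_ifs <;> simp

section OrderStatistics

variable {Ω : Type*} (X : ℕ → Ω → ℝ) (n : ℕ) (ω : Ω)

theorem sum_range_getD_sortedSample {M : Type*} [AddCommMonoid M] (f : ℝ → M) :
    ∑ j ∈ Finset.range n, f ((sortedSample X n ω).getD j 0) = ∑ i ∈ Finset.range n, f (X i ω) := by
  have hlen : (sortedSample X n ω).length = n := by simp [sortedSample]
  have := List.sum_range_length_getD (sortedSample X n ω) f 0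
  rw [hlen] at this
  rw [this, ← Multiset.sum_coe, ← Multiset.map_coe, sortedSample,
    Multiset.sort_eq, Multiset.map_map]
  rfl

variable {X n ω}

theorem strictMonoOn_getD_sortedSample (hω : Function.Injective fun i => X i ω) :
    StrictMonoOn (fun j => (sortedSample X n ω).getD j 0) (Set.Iio n) := by
  have hlen : (sortedSample X n ω).length = n := by simp [sortedSample]
  have hnodup : (sortedSample X n ω).Nodup := by
    rw [← Multiset.coe_nodup, sortedSample, Multiset.sort_eq]
    exact (Finset.range n).nodup.map hω
  have hsorted : (sortedSample X n ω).SortedLT :=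
    (Multiset.pairwise_sort _ _).sortedLE.sortedLT_of_nodup hnodup
  intro j hj j' hj' hjj'
  simp only [List.getD_eq_getElem _ _ (hlen ▸ hj : j < _),
    List.getD_eq_getElem _ _ (hlen ▸ hj' : j' < _)]
  exact hsorted.getElem_lt_getElem_of_lt hjj'

theorem sum_sum_getD_sortedSample (g : ℝ → ℝ → ℝ) :
    ∑ j ∈ Finset.range n, ∑ j' ∈ Finset.range n,
        g ((sortedSample X n ω).getD j 0) ((sortedSample X n ω).getD j' 0) =
      ∑ i ∈ Finset.range n, ∑ k ∈ Finset.range n, g (X i ω) (X k ω) := by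
  rw [← sum_range_getD_sortedSample X n ω (fun x => ∑ k ∈ Finset.range n, g x (X k ω))]
  exact Finset.sum_congr rfl fun j _ => sum_range_getD_sortedSample X n ω _

theorem povertyCount_eq_card_filter_getD_sortedSample (Z : ℝ) :
    povertyCount X Z n ω = ((Finset.range n).filter ((sortedSample X n ω).getD · 0 ≤ Z)).card := by
  simp only [povertyCount, Finset.card_filter]
  exact (sum_range_getD_sortedSample X n ω (fun x => if x ≤ Z then 1 else 0)).symm

theorem takayamaStat_eq_vStat (Z : ℝ) (hω : Function.Injective fun i => X i ω) :
    takayamaStat X Z n ω =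
      1 + 1 / (n : ℝ) -
        2 / ((∑ i ∈ Finset.range n, X i ω) / n) * vStat (takayamaKernel Z) X n ω := by
  rw [takayamaStat, povertyCount_eq_card_filter_getD_sortedSample,
    sum_range_sub_mul_eq_sum_sum_takayamaKernel (strictMonoOn_getD_sortedSample hω),
    sum_sum_getD_sortedSample, vStat]
  ring

end OrderStatistics

theorem statement2_general {Ω : Type*} [MeasureSpace Ω] [IsProbabilityMeasure (ℙ : Measure Ω)]
    (X : ℕ → Ω → ℝ) (F : ℝ → ℝ) (Z : ℝ)
    (hMeas : ∀ i, Measurable (X i))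
    (hIndep : iIndepFun X ℙ)
    (hIdent : ∀ i, IdentDistrib (X i) (X 0) ℙ ℙ)
    (hNonneg : ∀ i ω, 0 ≤ X i ω)
    (hF : ∀ x, F x = (ℙ {ω | X 0 ω ≤ x}).toReal)
    (hFcont : Continuous F)
    (hIntX : Integrable (X 0) ℙ)
    (hμpos : 0 < ∫ ω, X 0 ω) :
    TendstoInMeasure ℙ (fun (n : ℕ) (ω : Ω) => takayamaStat X Z n ω) atTop
      (fun _ => 1 - 2 / (∫ ω', X 0 ω') * ∫ ω', hFun F Z (X 0 ω')) := by
  have hcdf := cdf_map_eq (hMeas 0) hF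
  have : IsProbabilityMeasure ((ℙ : Measure Ω).map (X 0)) :=
    Measure.isProbabilityMeasure_map (hMeas 0).aemeasurable
  have : NullSingletonClass ((ℙ : Measure Ω).map (X 0)) :=
    nullSingletonClass_of_continuous_cdf _ (hcdf ▸ hFcont)
  have hmean : TendstoInMeasure ℙ (fun (n : ℕ) ω => (∑ i ∈ Finset.range n, X i ω) / n) atTop
      (fun _ => ∫ ω, X 0 ω) :=
    tendstoInMeasure_of_tendsto_ae (fun n => (Finset.measurable_sum _ fun i _ =>
      hMeas i).div_const _ |>.aestronglyMeasurable)
      (strong_law_ae_real X hIntX (fun i j hij => hIndep.indepFun hij) hIdent)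
  have hV := tendstoInMeasure_vStat hMeas hIndep hIdent (measurable_takayamaKernel Z)
    fun i k ω => abs_takayamaKernel_le (hNonneg i ω) Z _
  simp only [integral_takayamaKernel_of_iid hMeas hIndep hIdent (hNonneg 0), hcdf,
    ← hFun_eq_ellFun_mul] at hV
  have hshift : TendstoInMeasure ℙ (fun (n : ℕ) (_ : Ω) => 1 + 1 / (n : ℝ)) atTop (fun _ => 1) :=
    tendstoInMeasure_of_tendsto_ae (fun _ => aestronglyMeasurable_const) (ae_of_all _ fun _ => by
      simpa using tendsto_one_div_atTop_nhds_zero_nat.const_add (1 : ℝ))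
  refine TendstoInMeasure.congr_left (fun n => ?_) (hshift.comp₂_of_continuousAt
    (φ := fun x y => x - y) continuous_sub.continuousAt
    (hmean.comp₂_of_continuousAt (φ := fun m v => 2 / m * v)
      ((continuousAt_const.div continuousAt_fst hμpos.ne').mul continuousAt_snd) hV))
  filter_upwards [ae_injective_of_iid hMeas hIndep hIdent] with ω hω
  exact (takayamaStat_eq_vStat Z hω).symm

/-- Takayama's statistic converges in probability to the Takayama
parameter `T = 1 − (2/μ) ∫ x (1 − F(x)) 1_{(x ≤ Z)} dF(x)`. -/
theorem statement2 {Ω : Type*} [MeasureSpace Ω] [IsProbabilityMeasure (ℙ : Measure Ω)]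
    (X : ℕ → Ω → ℝ) (F : ℝ → ℝ) (Z : ℝ) (hZ : 0 < Z)
    (hMeas : ∀ i, Measurable (X i))
    (hIndep : iIndepFun X ℙ)
    (hIdent : ∀ i, IdentDistrib (X i) (X 0) ℙ ℙ)
    (hNonneg : ∀ i ω, 0 ≤ X i ω)
    (hF : ∀ x, F x = (ℙ {ω | X 0 ω ≤ x}).toReal)
    (hFcont : Continuous F)
    (hFmono : StrictMonoOn F (Set.Ici (0 : ℝ)))
    (hFinv1 : ∀ x ≥ (0 : ℝ), Finv F (F x) = x)
    (hFinv2 : ∀ s ∈ Set.Ioo (0 : ℝ) 1, F (Finv F s) = s)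
    (hIntX : Integrable (X 0) ℙ)
    (hIntX2 : Integrable (fun ω => (X 0 ω) ^ 2) ℙ)
    (hμpos : 0 < ∫ ω, X 0 ω) :
    TendstoInMeasure ℙ (fun (n : ℕ) (ω : Ω) => takayamaStat X Z n ω) atTop
      (fun _ => 1 - 2 / (∫ ω', X 0 ω') * ∫ ω', hFun F Z (X 0 ω')) :=
  statement2_general X F Z hMeas hIndep hIdent hNonneg hF hFcont hIntX hμpos
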